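/- If f' : [0,1] → ℝ is absolutely continuous, f'' ∈ L¹(0,1), and γ₂ ≤ f''(t) on [0,1], then |Q(f) - P(f)| ≤ (1/12 - √2/32)(S₁ - γ₂), where S₁ = f'(1) - f'(0), Q(f) = ∫₀¹ f - (√2/8)f(0) - (1-√2/4)f(1/2) - (√2/8)f(1), and P(f) = ((4 - 3√2)/96)(f'(1) - f'(0)). -/

import Mathlib

open MeasureTheory Real Set

/-!
Adding the correction `-(4 - 3√2)/96 · (f'(1) - f'(0))` makes the three-point rule exact on
quadratics. Taylor's formula with integral remainder (valid for `f'` absolutely continuous, via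
integration by parts) then writes the corrected error as `∫₀¹ K f''` for a Peano kernel `K` with
`∫₀¹ K = 0`, hence as `∫₀¹ K (f'' - γ₂)` with a nonnegative weight of total mass `S₁ - γ₂`.
On `[0, 1]` the kernel is `k(min s (1 - s))` for the quadratic
`k u = u²/2 - √2 u/8 - (1/24 - √2/32)`, so `|K| ≤ k(1/2) = 1/12 - √2/32`.
-/

theorem IntervalIntegrable.intervalIntegrable_primitive {g : ℝ → ℝ} {a b : ℝ}
    (hg : IntervalIntegrable g volume a b) :
    IntervalIntegrable (fun x => ∫ t in a..x, g t) volume a b :=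
  (intervalIntegral.continuousOn_primitive_interval' hg left_mem_uIcc).intervalIntegrable

theorem integral_mul_eq_sub_integral_deriv_mul_primitive {u u' g : ℝ → ℝ} {a b : ℝ}
    (hu : ∀ x, HasDerivAt u (u' x) x) (hu' : Continuous u')
    (hg : IntervalIntegrable g volume a b) :
    ∫ x in a..b, u x * g x
      = u b * (∫ x in a..b, g x) - ∫ x in a..b, u' x * ∫ t in a..x, g t := by
  have hderiv : deriv u = u' := funext fun x => (hu x).deriv
  have hU : AbsolutelyContinuousOnInterval u a b :=
    (contDiff_one_iff_deriv.2 ⟨fun x => (hu x).differentiableAt, hderiv ▸ hu'⟩).contDiffOn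
      |>.absolutelyContinuousOnInterval
  have hG := hg.absolutelyContinuousOnInterval_intervalIntegral left_mem_uIcc
  have hparts := hU.integral_mul_deriv_eq_deriv_mul hG
  simp only [intervalIntegral.integral_same, mul_zero, sub_zero, hderiv] at hparts
  rw [← hparts]
  refine intervalIntegral.integral_congr_ae ?_
  filter_upwards [hg.ae_hasDerivAt_integral] with x hx hxab
  rw [(hx (uIoc_subset_uIcc hxab) a left_mem_uIcc).deriv]

theorem integral_sub_pow_mul_primitive {g : ℝ → ℝ} {a b : ℝ} (n : ℕ)
    (hg : IntervalIntegrable g volume a b) :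
    ∫ x in a..b, (b - x) ^ n * ∫ t in a..x, g t
      = ∫ x in a..b, (b - x) ^ (n + 1) / (n + 1) * g x := by
  have hu : ∀ x, HasDerivAt (fun x => (b - x) ^ (n + 1) / (n + 1)) (-(b - x) ^ n) x := by
    intro x
    refine ((((hasDerivAt_id x).const_sub b).fun_pow (n + 1)).div_const _).congr_deriv ?_
    field_simp
    simp
  rw [integral_mul_eq_sub_integral_deriv_mul_primitive hu (by fun_prop) hg]
  simp [neg_mul, intervalIntegral.integral_neg]

section Taylor

variable {f f' f'' : ℝ → ℝ} {a b : ℝ}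

theorem intervalIntegrable_of_eq_add_primitive
    (hf' : ∀ u ∈ uIcc a b, f' u = f' a + ∫ s in a..u, f'' s)
    (hf'' : IntervalIntegrable f'' volume a b) :
    IntervalIntegrable f' volume a b :=
  (intervalIntegrable_const.add hf''.intervalIntegrable_primitive).congr
    (fun u hu => (hf' u (uIoc_subset_uIcc hu)).symm)

theorem eq_taylor_integral_remainder
    (hf : f b = f a + ∫ s in a..b, f' s)
    (hf' : ∀ u ∈ uIcc a b, f' u = f' a + ∫ s in a..u, f'' s)
    (hf'' : IntervalIntegrable f'' volume a b) :
    f b = f a + f' a * (b - a) + ∫ s in a..b, (b - s) * f'' s := by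
  have hcauchy := integral_sub_pow_mul_primitive 0 hf''
  simp only [pow_zero, one_mul, zero_add, pow_one, CharP.cast_eq_zero, div_one] at hcauchy
  rw [hf, intervalIntegral.integral_congr hf', intervalIntegral.integral_add
    intervalIntegrable_const hf''.intervalIntegrable_primitive, hcauchy,
    intervalIntegral.integral_const, smul_eq_mul]
  ring

theorem integral_eq_taylor_integral_remainder
    (hf : ∀ u ∈ uIcc a b, f u = f a + ∫ s in a..u, f' s)
    (hf' : ∀ u ∈ uIcc a b, f' u = f' a + ∫ s in a..u, f'' s)
    (hf'' : IntervalIntegrable f'' volume a b) :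
    ∫ t in a..b, f t
      = f a * (b - a) + f' a * (b - a) ^ 2 / 2 + ∫ s in a..b, (b - s) ^ 2 / 2 * f'' s := by
  have hf'int := intervalIntegrable_of_eq_add_primitive hf' hf''
  have hcauchy₀ := integral_sub_pow_mul_primitive 0 hf'int
  have hcauchy₁ := integral_sub_pow_mul_primitive 1 hf''
  simp only [pow_zero, one_mul, zero_add, pow_one, CharP.cast_eq_zero, div_one] at hcauchy₀
  simp only [pow_one, Nat.cast_one, one_add_one_eq_two] at hcauchy₁
  have hlin : ∫ s in a..b, (b - s) * f' a = f' a * (b - a) ^ 2 / 2 := by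
    rw [intervalIntegral.integral_mul_const, intervalIntegral.integral_comp_sub_left
      (fun x => x), integral_id]
    ring
  have hsplit : ∫ s in a..b, (b - s) * f' s
      = (∫ s in a..b, (b - s) * f' a) + ∫ s in a..b, (b - s) * ∫ t in a..s, f'' t := by
    rw [← intervalIntegral.integral_add ((by fun_prop : Continuous _).intervalIntegrable _ _)
      (hf''.intervalIntegrable_primitive.continuousOn_mul (by fun_prop))]
    exact intervalIntegral.integral_congr fun u hu => by simp only [hf' u hu, mul_add]
  rw [intervalIntegral.integral_congr hf, intervalIntegral.integral_add
    intervalIntegrable_const hf'int.intervalIntegrable_primitive, hcauchy₀, hsplit, hcauchy₁,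
    hlin, intervalIntegral.integral_const, smul_eq_mul]
  ring

end Taylor

theorem integral_sub_mul_eq_integral_max_mul {g : ℝ → ℝ} {a t b : ℝ} (hat : a ≤ t)
    (htb : t ≤ b) (hg : IntervalIntegrable g volume a b) :
    ∫ s in a..t, (t - s) * g s = ∫ s in a..b, max (t - s) 0 * g s := by
  have hint : IntervalIntegrable (fun s => max (t - s) 0 * g s) volume a b :=
    hg.continuousOn_mul (by fun_prop)
  rw [← intervalIntegral.integral_add_adjacent_intervals
    (hint.mono_set (uIcc_subset_uIcc_left (mem_uIcc_of_le hat htb)))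
    (hint.mono_set (uIcc_subset_uIcc_right (mem_uIcc_of_le hat htb)))]
  have hleft : ∫ s in a..t, max (t - s) 0 * g s = ∫ s in a..t, (t - s) * g s :=
    intervalIntegral.integral_congr fun s hs => by
      rw [uIcc_of_le hat] at hs
      simp [max_eq_left (sub_nonneg.2 hs.2)]
  have hright : ∫ s in t..b, max (t - s) 0 * g s = 0 := by
    rw [intervalIntegral.integral_congr (g := fun _ => 0) fun s hs => by
      rw [uIcc_of_le htb] at hs
      simp [max_eq_right (sub_nonpos.2 hs.1)]]
    simp
  rw [hleft, hright, add_zero]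

noncomputable def quadratureError (f : ℝ → ℝ) : ℝ :=
  (∫ t in (0:ℝ)..1, f t) - √2 / 8 * f 0 - (1 - √2 / 4) * f (1 / 2) - √2 / 8 * f 1

/-- The rule applied to `x ↦ max (x - s) 0` (whose integral over `[0, 1]` is `(1 - s)²/2`),
minus the weight `(4 - 3√2)/96` that the correction puts on `f'(1) - f'(0) = ∫₀¹ f''`. -/
noncomputable def peanoKernel (s : ℝ) : ℝ :=
  (1 - s) ^ 2 / 2 - (1 - √2 / 4) * max (1 / 2 - s) 0 - √2 / 8 * max (1 - s) 0
    - (4 - 3 * √2) / 96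

theorem continuous_peanoKernel : Continuous peanoKernel := by
  unfold peanoKernel
  fun_prop

theorem integral_peanoKernel_mul {g : ℝ → ℝ} (hg : IntervalIntegrable g volume 0 1) :
    ∫ s in (0:ℝ)..1, peanoKernel s * g s
      = (∫ s in (0:ℝ)..1, (1 - s) ^ 2 / 2 * g s)
        - (1 - √2 / 4) * (∫ s in (0:ℝ)..1, max (1 / 2 - s) 0 * g s)
        - √2 / 8 * (∫ s in (0:ℝ)..1, max (1 - s) 0 * g s)
        - (4 - 3 * √2) / 96 * ∫ s in (0:ℝ)..1, g s := by
  have hw : ∀ w : ℝ → ℝ, Continuous w → IntervalIntegrable (fun s => w s * g s) volume 0 1 :=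
    fun w hw => hg.continuousOn_mul hw.continuousOn
  have h₁ := hw (fun s => (1 - s) ^ 2 / 2) (by fun_prop)
  have h₂ := (hw (fun s => max (1 / 2 - s) 0) (by fun_prop)).const_mul (1 - √2 / 4)
  have h₃ := (hw (fun s => max (1 - s) 0) (by fun_prop)).const_mul (√2 / 8)
  rw [← intervalIntegral.integral_const_mul, ← intervalIntegral.integral_const_mul,
    ← intervalIntegral.integral_const_mul, ← intervalIntegral.integral_sub h₁ h₂,
    ← intervalIntegral.integral_sub (h₁.sub h₂) h₃,
    ← intervalIntegral.integral_sub ((h₁.sub h₂).sub h₃) (hg.const_mul _)]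
  refine intervalIntegral.integral_congr fun s _ => ?_
  simp only [peanoKernel]
  ring

theorem quadratureError_sub_eq_integral_peanoKernel_mul {f f' f'' : ℝ → ℝ}
    (hf : ∀ t ∈ Icc (0:ℝ) 1, f t = f 0 + ∫ s in (0:ℝ)..t, f' s)
    (hf' : ∀ t ∈ Icc (0:ℝ) 1, f' t = f' 0 + ∫ s in (0:ℝ)..t, f'' s)
    (hf'' : IntervalIntegrable f'' volume 0 1) :
    quadratureError f - (4 - 3 * √2) / 96 * (f' 1 - f' 0)
      = ∫ s in (0:ℝ)..1, peanoKernel s * f'' s := by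
  have hsub : ∀ {t : ℝ}, t ∈ Icc (0:ℝ) 1 → uIcc 0 t ⊆ Icc 0 1 := fun ht =>
    uIcc_of_le ht.1 ▸ Icc_subset_Icc_right ht.2
  have htaylor : ∀ t ∈ Icc (0:ℝ) 1,
      f t = f 0 + f' 0 * t + ∫ s in (0:ℝ)..1, max (t - s) 0 * f'' s :=
    fun t ht => by
      rw [← integral_sub_mul_eq_integral_max_mul ht.1 ht.2 hf'', eq_taylor_integral_remainder
        (hf t ht) (fun u hu => hf' u (hsub ht hu)) (hf''.mono_set (by simpa using hsub ht)),
        sub_zero]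
  have hmid := htaylor (1 / 2) (by norm_num)
  have hend := htaylor 1 (by norm_num)
  have h01 : uIcc (0:ℝ) 1 = Icc 0 1 := uIcc_of_le zero_le_one
  have hintegral := integral_eq_taylor_integral_remainder (fun u hu => hf u (h01 ▸ hu))
    (fun u hu => hf' u (h01 ▸ hu)) hf''
  have hslope : f' 1 - f' 0 = ∫ s in (0:ℝ)..1, f'' s := by
    rw [hf' 1 (right_mem_Icc.2 zero_le_one)]
    ring
  rw [integral_peanoKernel_mul hf'', quadratureError, hintegral, hmid, hend, hslope]
  ring

theorem quadratureError_sq_div_two :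
    quadratureError (fun t => t ^ 2 / 2) = (4 - 3 * √2) / 96 := by
  rw [quadratureError, intervalIntegral.integral_div, integral_pow]
  ring

theorem integral_peanoKernel : ∫ s in (0:ℝ)..1, peanoKernel s = 0 := by
  have hrep := quadratureError_sub_eq_integral_peanoKernel_mul (f := fun t => t ^ 2 / 2)
    (f' := id) (f'' := fun _ => 1) (fun t _ => by simp [integral_id]) (fun t _ => by simp)
    intervalIntegrable_const
  simpa [quadratureError_sq_div_two] using hrep.symm

theorem abs_peanoKernel_le {s : ℝ} (hs : s ∈ Icc (0:ℝ) 1) :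
    |peanoKernel s| ≤ 1 / 12 - √2 / 32 := by
  have hsq : √2 ^ 2 = 2 := sq_sqrt zero_le_two
  have hlo : 1.4 ≤ √2 := by nlinarith [sqrt_nonneg 2]
  have hhi : √2 ≤ 1.5 := by nlinarith [sqrt_nonneg 2]
  rw [peanoKernel, max_eq_left (sub_nonneg.2 hs.2), abs_le]
  rcases le_total s (1 / 2) with hs' | hs'
  · rw [max_eq_left (sub_nonneg.2 hs')]
    constructor <;> nlinarith [sq_nonneg (s - √2 / 8), hs.1]
  · rw [max_eq_right (sub_nonpos.2 hs')]
    constructor <;> nlinarith [sq_nonneg (1 - s - √2 / 8), hs.2]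

theorem abs_integral_mul_le_of_abs_le {K g : ℝ → ℝ} {a b C : ℝ} (hab : a ≤ b)
    (hK : Continuous K) (hKC : ∀ s ∈ Icc a b, |K s| ≤ C)
    (hg : IntervalIntegrable g volume a b) (hg₀ : ∀ s ∈ Icc a b, 0 ≤ g s) :
    |∫ s in a..b, K s * g s| ≤ C * ∫ s in a..b, g s := by
  rw [← intervalIntegral.integral_const_mul]
  refine (intervalIntegral.abs_integral_le_integral_abs hab).trans <|
    intervalIntegral.integral_mono_on hab (hg.continuousOn_mul hK.continuousOn).abs
      (hg.const_mul C) fun s hs => ?_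
  rw [abs_mul, abs_of_nonneg (hg₀ s hs)]
  exact mul_le_mul_of_nonneg_right (hKC s hs) (hg₀ s hs)

theorem stmt_15 (f f' f'' : ℝ → ℝ) (γ₂ : ℝ)
    (hf : ∀ t ∈ Icc (0:ℝ) 1, f t = f 0 + ∫ s in (0:ℝ)..t, f' s)
    (hac : ∀ t ∈ Icc (0:ℝ) 1, f' t = f' 0 + ∫ s in (0:ℝ)..t, f'' s)
    (hint : IntervalIntegrable f'' volume 0 1)
    (hbd : ∀ t ∈ Icc (0:ℝ) 1, γ₂ ≤ f'' t) :
    |((∫ t in (0:ℝ)..1, f t) - Real.sqrt 2 / 8 * f 0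
        - (1 - Real.sqrt 2 / 4) * f (1/2) - Real.sqrt 2 / 8 * f 1)
      - (4 - 3 * Real.sqrt 2) / 96 * (f' 1 - f' 0)|
      ≤ (1/12 - Real.sqrt 2 / 32) * ((f' 1 - f' 0) - γ₂) := by
  have hslope : f' 1 - f' 0 - γ₂ = ∫ s in (0:ℝ)..1, (f'' s - γ₂) := by
    rw [intervalIntegral.integral_sub hint intervalIntegrable_const, hac 1 (by simp)]
    simp
  calc |quadratureError f - (4 - 3 * √2) / 96 * (f' 1 - f' 0)|
      = |∫ s in (0:ℝ)..1, peanoKernel s * f'' s| := by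
        rw [quadratureError_sub_eq_integral_peanoKernel_mul hf hac hint]
    _ = |∫ s in (0:ℝ)..1, peanoKernel s * (f'' s - γ₂)| := by
        simp only [mul_sub]
        rw [intervalIntegral.integral_sub (hint.continuousOn_mul
          continuous_peanoKernel.continuousOn) (intervalIntegrable_const.continuousOn_mul
          continuous_peanoKernel.continuousOn), intervalIntegral.integral_mul_const,
          integral_peanoKernel, zero_mul, sub_zero]
    _ ≤ (1 / 12 - √2 / 32) * (f' 1 - f' 0 - γ₂) := hslope ▸ abs_integral_mul_le_of_abs_le
        zero_le_one continuous_peanoKernel (fun s => abs_peanoKernel_le)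
        (hint.sub intervalIntegrable_const) fun s hs => sub_nonneg.2 (hbd s hs)
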